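/- Let Ω ⊂ ℝ² be a bounded open set, let q : Ω → ℝ be measurable with 1 < α ≤ q(x) ≤ 2 a.e. in Ω, let θ ∈ L^∞(Ω;ℝ²) with |θ(x)| ≤ 1 a.e., let η ∈ (0,1), and let C₀ > 0. Then there exists a constant C > 0 (depending only on α) such that for every u ∈ W^{1,1}(Ω) with 0 ≤ u(x) ≤ C₀ a.e. in Ω and ∫_Ω (1/q(x)) |R_η ∇u(x)|^{q(x)} dx < ∞, one has ‖u‖^α_{W^{1,q(·)}(Ω)} ≤ C ( |Ω| C₀² + 2 + (1 − η²)^{-2} ∫_Ω (1/q(x)) |R_η ∇u(x)|^{q(x)} dx ), where ‖u‖_{W^{1,q(·)}(Ω)} = ‖u‖_{L^{q(·)}(Ω)} + ‖∇u‖_{L^{q(·)}(Ω;ℝ²)}. -/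

import Mathlib

open MeasureTheory Real Set Filter
open scoped ENNReal Topology RealInnerProductSpace

noncomputable section

local notation "E2" => EuclideanSpace ℝ (Fin 2)

/-- The directional operator `R_η ξ = ξ − η² (θ(x), ξ) θ(x)`. -/
def Rop (θ : E2 → E2) (η : ℝ) (x : E2) (ξ : E2) : E2 :=
  ξ - (η ^ 2 * ⟪θ x, ξ⟫) • θ x

/-- `Du` is the weak (distributional) gradient of `u` on `Ω`, and `u ∈ W^{1,1}(Ω)`. -/
def IsWeakGradient (Ω : Set E2) (u : E2 → ℝ) (Du : E2 → E2) : Prop :=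
  IntegrableOn u Ω volume ∧ IntegrableOn Du Ω volume ∧
  ∀ φ : E2 → ℝ, ContDiff ℝ (⊤ : ℕ∞) φ → HasCompactSupport φ → tsupport φ ⊆ Ω →
    ∫ x in Ω, u x • gradient φ x = -∫ x in Ω, φ x • Du x

/-- The Luxemburg norm on the variable-exponent Lebesgue space `L^{q(·)}(Ω)`. -/
def luxNorm {F : Type*} [NormedAddCommGroup F]
    (Ω : Set E2) (q : E2 → ℝ) (f : E2 → F) : ℝ :=
  sInf {l : ℝ | 0 < l ∧ ∫ x in Ω, (‖f x‖ / l) ^ q x ≤ 1}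

lemma luxNorm_nonneg {F : Type*} [NormedAddCommGroup F]
    (Ω : Set E2) (q : E2 → ℝ) (f : E2 → F) : 0 ≤ luxNorm Ω q f :=
  Real.sInf_nonneg (fun _ hl => hl.1.le)

lemma luxNorm_le {F : Type*} [NormedAddCommGroup F]
    (Ω : Set E2) (q : E2 → ℝ) (f : E2 → F) {l : ℝ} (hl : 0 < l)
    (h : ∫ x in Ω, (‖f x‖ / l) ^ q x ≤ 1) : luxNorm Ω q f ≤ l :=
  csInf_le ⟨0, fun _ hm => hm.1.le⟩ ⟨hl, h⟩

set_option maxHeartbeats 1000000 in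
/-- A priori bound for the `W^{1,q(·)}(Ω)`-norm of feasible functions in terms of the
directional-TV energy term. -/
theorem statement4
    (Ω : Set E2) (hΩ_open : IsOpen Ω) (hΩ_bdd : Bornology.IsBounded Ω)
    (q : E2 → ℝ) (hq_meas : Measurable q) (α : ℝ) (hα : 1 < α)
    (hq : ∀ᵐ x ∂volume.restrict Ω, α ≤ q x ∧ q x ≤ 2)
    (θ : E2 → E2) (hθ : ∀ᵐ x ∂volume.restrict Ω, ‖θ x‖ ≤ 1)
    (η : ℝ) (hη : η ∈ Ioo (0 : ℝ) 1) (C₀ : ℝ) (hC₀ : 0 < C₀) :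
    ∃ C > (0 : ℝ), ∀ (u : E2 → ℝ) (Du : E2 → E2),
      IsWeakGradient Ω u Du →
      (∀ᵐ x ∂volume.restrict Ω, 0 ≤ u x ∧ u x ≤ C₀) →
      IntegrableOn (fun x => (1 / q x) * ‖Rop θ η x (Du x)‖ ^ q x) Ω volume →
      (luxNorm Ω q u + luxNorm Ω q Du) ^ α ≤
        C * ((volume Ω).toReal * C₀ ^ 2 + 2 +
          ((1 - η ^ 2) ^ 2)⁻¹ * ∫ x in Ω, (1 / q x) * ‖Rop θ η x (Du x)‖ ^ q x) := by
  have hα0 : (0:ℝ) < α := lt_trans one_pos hα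
  have hαne : α ≠ 0 := hα0.ne'
  have hη2 : 0 < 1 - η ^ 2 := by nlinarith [hη.1, hη.2]
  have hη2le : 1 - η ^ 2 ≤ 1 := by nlinarith [hη.1]
  set V : ℝ := (volume Ω).toReal with hVdef
  have hV0 : 0 ≤ V := ENNReal.toReal_nonneg
  have hVfin : volume Ω < ⊤ := hΩ_bdd.measure_lt_top
  -- the bound for the Luxemburg norm of u
  set w : ℝ := (V + 1) ^ α⁻¹ with hwdef
  have hw1 : (1:ℝ) ≤ w := by
    calc (1:ℝ) = 1 ^ α⁻¹ := (Real.one_rpow _).symm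
    _ ≤ (V + 1) ^ α⁻¹ := Real.rpow_le_rpow zero_le_one (by linarith) (by positivity)
  have hw0 : (0:ℝ) < w := lt_of_lt_of_le one_pos hw1
  set Lu : ℝ := max 1 (C₀ * w) with hLudef
  have hLu1 : (1:ℝ) ≤ Lu := le_max_left _ _
  have hLu0 : (0:ℝ) < Lu := lt_of_lt_of_le one_pos hLu1
  set K : ℝ := Lu + 1 with hKdef
  have hK0 : (0:ℝ) < K := by positivity
  set P : ℝ := (2:ℝ) ^ α with hPdef
  have hP0 : (0:ℝ) < P := Real.rpow_pos_of_pos two_pos α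
  have hKα0 : (0:ℝ) < K ^ α := Real.rpow_pos_of_pos hK0 α
  refine ⟨P * (K ^ α + 1) + 2 * P, by positivity, ?_⟩
  intro u Du _hGrad hu hInt
  set I : ℝ := ∫ x in Ω, (1 / q x) * ‖Rop θ η x (Du x)‖ ^ q x with hIdef
  have hI0 : 0 ≤ I := by
    apply integral_nonneg_of_ae
    filter_upwards [hq] with x hx
    have hqx : 0 < q x := lt_of_lt_of_le (lt_trans one_pos hα) hx.1
    positivity
  set J : ℝ := ((1 - η ^ 2) ^ 2)⁻¹ * I with hJdef
  have hJ0 : 0 ≤ J := by positivity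
  set M : ℝ := 2 * J with hMdef
  have hM0 : 0 ≤ M := by positivity
  -- bound on luxNorm of u
  have hAu : luxNorm Ω q u ≤ Lu := by
    apply luxNorm_le Ω q u hLu0
    have hpt : ∀ᵐ x ∂volume.restrict Ω,
        (‖u x‖ / Lu) ^ q x ≤ (V + 1)⁻¹ := by
      filter_upwards [hq, hu] with x hqx hux
      have hnorm : ‖u x‖ ≤ C₀ := by
        rw [Real.norm_eq_abs, abs_of_nonneg hux.1]; exact hux.2
      have ht0 : 0 ≤ ‖u x‖ / Lu := by positivity
      have htw : ‖u x‖ / Lu ≤ w⁻¹ := by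
        have h1 : ‖u x‖ / Lu ≤ C₀ / Lu := by gcongr
        have h2 : C₀ / Lu ≤ C₀ / (C₀ * w) :=
          div_le_div_of_nonneg_left hC₀.le (by positivity) (le_max_right _ _)
        have h3 : C₀ / (C₀ * w) = w⁻¹ := by
          field_simp
        linarith
      have ht1 : ‖u x‖ / Lu ≤ 1 := by
        have : w⁻¹ ≤ 1 := by
          rw [inv_le_one_iff₀]; right; exact hw1
        linarith
      have hqx1 : (0:ℝ) < q x := lt_of_lt_of_le hα0 hqx.1
      have hwα : (w⁻¹) ^ α = (V + 1)⁻¹ := by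
        rw [Real.inv_rpow hw0.le, hwdef, Real.rpow_inv_rpow (by linarith) hαne]
      rcases eq_or_lt_of_le ht0 with h0 | h0
      · rw [← h0, Real.zero_rpow hqx1.ne']
        positivity
      · calc (‖u x‖ / Lu) ^ q x ≤ (‖u x‖ / Lu) ^ α :=
              Real.rpow_le_rpow_of_exponent_ge h0 ht1 hqx.1
        _ ≤ (w⁻¹) ^ α := Real.rpow_le_rpow ht0 htw hα0.le
        _ = (V + 1)⁻¹ := hwα
    by_cases hint : Integrable (fun x => (‖u x‖ / Lu) ^ q x) (volume.restrict Ω)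
    · have hconst : IntegrableOn (fun _ : E2 => (V + 1)⁻¹) Ω volume :=
        integrableOn_const hVfin.ne
      have h := integral_mono_ae hint hconst hpt
      rw [setIntegral_const] at h
      have : V * (V + 1)⁻¹ ≤ 1 := by
        rw [mul_inv_le_iff₀ (by linarith)]; linarith
      calc ∫ x in Ω, (‖u x‖ / Lu) ^ q x ≤ V • (V + 1)⁻¹ := h
      _ = V * (V + 1)⁻¹ := by rw [smul_eq_mul]
      _ ≤ 1 := this
    · rw [integral_undef hint]; norm_num
  -- bound on luxNorm of Du
  set ld : ℝ := max 1 ((M + 1) ^ α⁻¹) with hlddef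
  have hld1 : (1:ℝ) ≤ ld := le_max_left _ _
  have hld0 : (0:ℝ) < ld := lt_of_lt_of_le one_pos hld1
  have hldα : M + 1 ≤ ld ^ α := by
    calc M + 1 = ((M + 1) ^ α⁻¹) ^ α := (Real.rpow_inv_rpow (by linarith) hαne).symm
    _ ≤ ld ^ α := Real.rpow_le_rpow (by positivity) (le_max_right _ _) hα0.le
  have hldα0 : (0:ℝ) < ld ^ α := Real.rpow_pos_of_pos hld0 α
  set c : ℝ := 2 * ((1 - η ^ 2) ^ 2)⁻¹ * (ld ^ α)⁻¹ with hcdef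
  have hc0 : 0 ≤ c := by positivity
  have hBd : luxNorm Ω q Du ≤ ld := by
    apply luxNorm_le Ω q Du hld0
    have hpt : ∀ᵐ x ∂volume.restrict Ω,
        (‖Du x‖ / ld) ^ q x ≤ c * ((1 / q x) * ‖Rop θ η x (Du x)‖ ^ q x) := by
      filter_upwards [hq, hθ] with x hqx hθx
      have hs1 : (1:ℝ) < q x := lt_of_lt_of_le hα hqx.1
      have hs0 : (0:ℝ) < q x := lt_trans one_pos hs1
      have hd0 : (0:ℝ) ≤ ‖Du x‖ := norm_nonneg _
      have hr0 : (0:ℝ) ≤ ‖Rop θ η x (Du x)‖ := norm_nonneg _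
      -- (1 - η²)‖Du x‖ ≤ ‖Rop θ η x (Du x)‖
      have hr : (1 - η ^ 2) * ‖Du x‖ ≤ ‖Rop θ η x (Du x)‖ := by
        have hsub : ‖Du x‖ - ‖(η ^ 2 * ⟪θ x, Du x⟫) • θ x‖ ≤ ‖Rop θ η x (Du x)‖ := by
          rw [Rop]; exact norm_sub_norm_le _ _
        have hinner : |⟪θ x, Du x⟫| ≤ ‖θ x‖ * ‖Du x‖ := abs_real_inner_le_norm _ _
        have hθ0 : (0:ℝ) ≤ ‖θ x‖ := norm_nonneg _
        have key : |⟪θ x, Du x⟫| * ‖θ x‖ ≤ ‖Du x‖ := by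
          nlinarith [abs_nonneg (⟪θ x, Du x⟫)]
        have hsm : ‖(η ^ 2 * ⟪θ x, Du x⟫) • θ x‖ ≤ η ^ 2 * ‖Du x‖ := by
          rw [norm_smul, Real.norm_eq_abs, abs_mul, abs_of_nonneg (sq_nonneg η),
            mul_assoc]
          exact mul_le_mul_of_nonneg_left key (sq_nonneg η)
        nlinarith
      -- step: (1/q x) ‖Rop‖^q ≥ (1/2)(1-η²)² ‖Du‖^q
      have hpow : (1 - η ^ 2) ^ 2 * ‖Du x‖ ^ q x ≤ ‖Rop θ η x (Du x)‖ ^ q x := by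
        have h1 : ((1 - η ^ 2) * ‖Du x‖) ^ q x ≤ ‖Rop θ η x (Du x)‖ ^ q x :=
          Real.rpow_le_rpow (by positivity) hr hs0.le
        rw [Real.mul_rpow hη2.le hd0] at h1
        have h2 : ((1 - η ^ 2) : ℝ) ^ (2:ℝ) ≤ (1 - η ^ 2) ^ q x :=
          Real.rpow_le_rpow_of_exponent_ge hη2 hη2le hqx.2
        rw [Real.rpow_two] at h2
        have h3 : (0:ℝ) ≤ ‖Du x‖ ^ q x := Real.rpow_nonneg hd0 _
        exact le_trans (mul_le_mul_of_nonneg_right h2 h3) h1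
      have hfrac : (1:ℝ)/2 ≤ 1 / q x := by
        apply one_div_le_one_div_of_le hs0 hqx.2
      have hEkey : (1/2) * ((1 - η ^ 2) ^ 2 * ‖Du x‖ ^ q x) ≤
          (1 / q x) * ‖Rop θ η x (Du x)‖ ^ q x := by
        have h4 : (0:ℝ) ≤ ‖Rop θ η x (Du x)‖ ^ q x := Real.rpow_nonneg hr0 _
        calc (1/2) * ((1 - η ^ 2) ^ 2 * ‖Du x‖ ^ q x)
            ≤ (1/2) * ‖Rop θ η x (Du x)‖ ^ q x :=
              mul_le_mul_of_nonneg_left hpow (by norm_num)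
        _ ≤ (1 / q x) * ‖Rop θ η x (Du x)‖ ^ q x :=
              mul_le_mul_of_nonneg_right hfrac h4
      -- step: (‖Du‖/ld)^q ≤ ‖Du‖^q / ld^α
      have hdiv : (‖Du x‖ / ld) ^ q x ≤ ‖Du x‖ ^ q x / ld ^ α := by
        rw [Real.div_rpow hd0 hld0.le]
        apply div_le_div_of_nonneg_left (Real.rpow_nonneg hd0 _) hldα0
        exact Real.rpow_le_rpow_of_exponent_le hld1 hqx.1
      have hη4 : (0:ℝ) < (1 - η ^ 2) ^ 2 := by positivity
      calc (‖Du x‖ / ld) ^ q x ≤ ‖Du x‖ ^ q x / ld ^ α := hdiv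
      _ ≤ c * ((1 / q x) * ‖Rop θ η x (Du x)‖ ^ q x) := by
          have h5 := mul_le_mul_of_nonneg_left hEkey
            (by positivity : (0:ℝ) ≤ 2 * ((1 - η ^ 2) ^ 2)⁻¹)
          have h6 : 2 * ((1 - η ^ 2) ^ 2)⁻¹ * ((1/2) * ((1 - η ^ 2) ^ 2 * ‖Du x‖ ^ q x))
              = ‖Du x‖ ^ q x := by
            field_simp
          rw [h6] at h5
          have h7 : c * ((1 / q x) * ‖Rop θ η x (Du x)‖ ^ q x) =
              (2 * ((1 - η ^ 2) ^ 2)⁻¹ * ((1 / q x) * ‖Rop θ η x (Du x)‖ ^ q x))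
                / ld ^ α := by
            rw [hcdef]; ring
          rw [h7]
          gcongr
    by_cases hint : Integrable (fun x => (‖Du x‖ / ld) ^ q x) (volume.restrict Ω)
    · have hg : Integrable (fun x => c * ((1 / q x) * ‖Rop θ η x (Du x)‖ ^ q x))
          (volume.restrict Ω) := hInt.const_mul c
      have h := integral_mono_ae hint hg hpt
      rw [show (∫ x in Ω, c * ((1 / q x) * ‖Rop θ η x (Du x)‖ ^ q x)) = c * I from
        MeasureTheory.integral_const_mul c _] at h
      have hcI : c * I ≤ 1 := by
        rw [hcdef]
        have : 2 * ((1 - η ^ 2) ^ 2)⁻¹ * (ld ^ α)⁻¹ * I = M * (ld ^ α)⁻¹ := by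
          rw [hMdef, hJdef]; ring
        rw [this]
        rw [mul_inv_le_iff₀ hldα0]
        calc M ≤ M + 1 := by linarith
        _ ≤ ld ^ α := hldα
        _ = 1 * ld ^ α := (one_mul _).symm
      exact le_trans h hcI
    · rw [integral_undef hint]; norm_num
  -- final arithmetic
  have hA0 : 0 ≤ luxNorm Ω q u := luxNorm_nonneg Ω q u
  have hB0 : 0 ≤ luxNorm Ω q Du := luxNorm_nonneg Ω q Du
  set s : ℝ := (M + 1) ^ α⁻¹ with hsdef
  have hs0 : (0:ℝ) ≤ s := Real.rpow_nonneg (by linarith) _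
  have hsα : s ^ α = M + 1 := Real.rpow_inv_rpow (by linarith) hαne
  have hld_le : ld ≤ 1 + s := by
    rw [hlddef]
    apply max_le (by linarith) (by linarith)
  have hsum : luxNorm Ω q u + luxNorm Ω q Du ≤ K + s := by
    have := hld_le
    rw [hKdef]; linarith
  have hstep1 : (luxNorm Ω q u + luxNorm Ω q Du) ^ α ≤ (K + s) ^ α :=
    Real.rpow_le_rpow (by linarith) hsum hα0.le
  have hstep2 : (K + s) ^ α ≤ P * (K ^ α + s ^ α) := by
    have hmax : K + s ≤ 2 * max K s := by
      rcases le_total K s with h | h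
      · have : max K s = s := max_eq_right h
        rw [this]; linarith
      · have : max K s = K := max_eq_left h
        rw [this]; linarith
    have hmax0 : (0:ℝ) ≤ max K s := le_trans hK0.le (le_max_left _ _)
    calc (K + s) ^ α ≤ (2 * max K s) ^ α :=
          Real.rpow_le_rpow (by linarith) hmax hα0.le
    _ = P * (max K s) ^ α := Real.mul_rpow (by norm_num) hmax0
    _ ≤ P * (K ^ α + s ^ α) := by
        apply mul_le_mul_of_nonneg_left _ hP0.le
        rcases max_cases K s with ⟨he, _⟩ | ⟨he, _⟩
        · rw [he]
          have : (0:ℝ) ≤ s ^ α := Real.rpow_nonneg hs0 _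
          linarith
        · rw [he]
          linarith [hKα0.le]
  have hfinal : P * (K ^ α + s ^ α) ≤
      (P * (K ^ α + 1) + 2 * P) * (V * C₀ ^ 2 + 2 + J) := by
    rw [hsα, hMdef]
    have hVC : (0:ℝ) ≤ V * C₀ ^ 2 := by positivity
    nlinarith [mul_nonneg (by positivity : (0:ℝ) ≤ P * (K ^ α + 1)) hJ0,
      mul_nonneg (by positivity : (0:ℝ) ≤ P * (K ^ α + 1) + 2 * P) hVC,
      hP0.le, hKα0.le, hJ0, mul_nonneg hP0.le hKα0.le]
  calc (luxNorm Ω q u + luxNorm Ω q Du) ^ α ≤ (K + s) ^ α := hstep1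
  _ ≤ P * (K ^ α + s ^ α) := hstep2
  _ ≤ (P * (K ^ α + 1) + 2 * P) * (V * C₀ ^ 2 + 2 + J) := hfinal
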